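/- arXiv:2411.03468 — 6 statements merged into one kernel-verified Lean document; each statement's English description precedes it below -/
import Mathlib

section
/- There is no positive integer x such that {x·(3/2)^n} < 1/2 for every integer n ≥ 1; equivalently, the intersection of the sets Xₙ over all n ≥ 1 is empty, so there are no Z-numbers among the positive integers. -/
theorem no_Z_number_in_positive_integers :
    ¬ ∃ x : ℕ, 0 < x ∧ ∀ n : ℕ, 1 ≤ n → Int.fract ((x : ℝ) * (3 / 2) ^ n) < 1 / 2 := by
  rintro ⟨x, hx, h⟩
  obtain ⟨k, m, hm, rfl⟩ := Nat.exists_eq_pow_mul_and_not_dvd hx.ne' 2 (by norm_num)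
  have hoddm : Odd m := Nat.odd_iff.mpr (Nat.two_dvd_ne_zero.mp hm)
  have hodd : Odd (m * 3 ^ (k + 1)) := hoddm.mul (Odd.pow ⟨1, by norm_num⟩)
  obtain ⟨j, hj⟩ := hodd
  have heq : ((2 ^ k * m : ℕ) : ℝ) * (3 / 2) ^ (k + 1) = ((j : ℤ) : ℝ) + 1 / 2 := by
    have h1 : ((m * 3 ^ (k + 1) : ℕ) : ℝ) = 2 * (j : ℝ) + 1 := by exact_mod_cast hj
    push_cast at h1 ⊢
    have h2 : (2 : ℝ) ^ (k + 1) ≠ 0 := by positivity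
    field_simp
    rw [div_pow] at *
    field_simp
    linear_combination (2:ℝ) ^ (k + 1) * h1
  have := h (k + 1) (Nat.le_add_left 1 k)
  rw [heq, Int.fract_intCast_add] at this
  norm_num [Int.fract] at this
end

section
/- There is no positive integer x that is a Z-number; that is, for every positive integer x there exists an integer n ≥ 0 such that {x·(3/2)^n} ≥ 1/2. -/
theorem no_positive_integer_Z_number (x : ℕ) (hx : 0 < x) :
    ∃ n : ℕ, (1 : ℝ) / 2 ≤ Int.fract ((x : ℝ) * (3 / 2) ^ n) := by
  obtain ⟨k, m, hxm, hodd⟩ : ∃ k m, 2 ^ k * m = x ∧ ¬ 2 ∣ m :=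
    ⟨padicValNat 2 x, x / 2 ^ padicValNat 2 x,
      Nat.ordProj_mul_ordCompl_eq_self x 2,
      Nat.not_dvd_ordCompl (by norm_num) hx.ne'⟩
  have hodd' : Odd (m * 3 ^ (k + 1)) :=
    (Nat.odd_mul).2 ⟨Nat.odd_iff.2 (by omega), Odd.pow (by decide)⟩
  obtain ⟨j, hj⟩ := hodd'
  refine ⟨k + 1, le_of_eq ?_⟩
  have hx' : (x : ℝ) = 2 ^ k * m := by rw [← hxm]; push_cast; ring
  have hj' : (m : ℝ) * 3 ^ (k + 1) = 2 * j + 1 := by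
    have := congrArg (Nat.cast : ℕ → ℝ) hj
    push_cast at this ⊢; linarith
  have key : (x : ℝ) * (3 / 2) ^ (k + 1) = (j : ℝ) + 1 / 2 := by
    rw [hx', div_pow, pow_succ]
    have h2 : (2:ℝ) ^ k ≠ 0 := by positivity
    field_simp
    rw [pow_succ] at hj'; ring_nf; ring_nf at hj'; linear_combination 2 * (2:ℝ) ^ k * hj'
  rw [key, Int.fract_natCast_add, Int.fract_eq_self.2 (by norm_num)]
end

section
/- For any nonnegative integer g₀, there exists at most one Z-number in the interval [g₀, g₀+1); moreover, any Z-number in [g₀, g₀+1) lies in the first half [g₀, g₀ + 1/2) of this interval. -/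
/-- A Z-number is a positive real `x` with `{x (3/2)^n} < 1/2` for all `n ≥ 0`. -/
def IsZNumber (x : ℝ) : Prop :=
  0 < x ∧ ∀ n : ℕ, Int.fract (x * (3 / 2) ^ n) < 1 / 2

lemma stepA (t : ℝ) (b : ℤ) (hb : ⌊t⌋ = 2 * b) (h1 : Int.fract t < 1/2) :
    ⌊3/2 * t⌋ = 3 * b := by
  have hf0 : (0:ℝ) ≤ Int.fract t := Int.fract_nonneg t
  have ht : t = 2 * b + Int.fract t := by
    have := Int.floor_add_fract t; rw [hb] at this; push_cast at this ⊢; linarith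
  rw [Int.floor_eq_iff]
  constructor <;> push_cast <;> nlinarith
lemma stepB (t : ℝ) (b : ℤ) (hb : ⌊t⌋ = 2 * b + 1) (h1 : Int.fract t < 1/2)
    (h2 : Int.fract (3/2 * t) < 1/2) : ⌊3/2 * t⌋ = 3 * b + 2 := by
  have hf0 : (0:ℝ) ≤ Int.fract t := Int.fract_nonneg t
  have ht : t = 2 * b + 1 + Int.fract t := by
    have := Int.floor_add_fract t; rw [hb] at this; push_cast at this ⊢; linarith
  -- first show fract t ≥ 1/3
  have hge : (1:ℝ)/3 ≤ Int.fract t := by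
    by_contra hlt
    push_neg at hlt
    have hfl : ⌊3/2 * t⌋ = 3 * b + 1 := by
      rw [Int.floor_eq_iff]
      constructor <;> push_cast <;> nlinarith
    have := Int.fract_nonneg (3/2 * t)
    have hfr : Int.fract (3/2 * t) = 3/2 * t - (3 * b + 1) := by
      rw [Int.fract, hfl]; push_cast; ring
    rw [hfr] at h2
    nlinarith
  rw [Int.floor_eq_iff]
  constructor <;> push_cast <;> nlinarith

lemma floors_eq {x y : ℝ} (hx : IsZNumber x) (hy : IsZNumber y)
    (h0 : ⌊x⌋ = ⌊y⌋) : ∀ n : ℕ, ⌊x * (3/2)^n⌋ = ⌊y * (3/2)^n⌋ := by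
  intro n
  induction n with
  | zero => simpa using h0
  | succ n ih =>
    have hx1 := hx.2 n
    have hy1 := hy.2 n
    have hx2 := hx.2 (n+1)
    have hy2 := hy.2 (n+1)
    have hxr : x * (3/2)^(n+1) = 3/2 * (x * (3/2)^n) := by ring
    have hyr : y * (3/2)^(n+1) = 3/2 * (y * (3/2)^n) := by ring
    rw [hxr, hyr]
    rw [hxr] at hx2; rw [hyr] at hy2
    rcases Int.even_or_odd ⌊x * (3/2)^n⌋ with ⟨b, hb⟩ | ⟨b, hb⟩
    · have hb' : ⌊x * (3/2)^n⌋ = 2 * b := by omega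
      have hb'' : ⌊y * (3/2)^n⌋ = 2 * b := by omega
      rw [stepA _ b hb' hx1, stepA _ b hb'' hy1]
    · have hb' : ⌊x * (3/2)^n⌋ = 2 * b + 1 := by omega
      have hb'' : ⌊y * (3/2)^n⌋ = 2 * b + 1 := by omega
      rw [stepB _ b hb' hx1 hx2, stepB _ b hb'' hy1 hy2]

theorem Z_number_unique_in_interval (g₀ : ℕ) :
    (∀ x y : ℝ, IsZNumber x → IsZNumber y →
      x ∈ Set.Ico (g₀ : ℝ) (g₀ + 1) → y ∈ Set.Ico (g₀ : ℝ) (g₀ + 1) → x = y) ∧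
    (∀ x : ℝ, IsZNumber x → x ∈ Set.Ico (g₀ : ℝ) (g₀ + 1) →
      x ∈ Set.Ico (g₀ : ℝ) (g₀ + 1 / 2)) := by
  have hfl : ∀ x : ℝ, x ∈ Set.Ico (g₀ : ℝ) (g₀ + 1) → ⌊x⌋ = (g₀ : ℤ) := by
    intro x hx
    rw [Int.floor_eq_iff]
    constructor <;> push_cast <;> [exact hx.1; exact hx.2]
  constructor
  · intro x y hx hy hxm hym
    have h0 : ⌊x⌋ = ⌊y⌋ := by rw [hfl x hxm, hfl y hym]
    have key := floors_eq hx hy h0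
    by_contra hne
    have hpos : 0 < |x - y| := abs_pos.mpr (sub_ne_zero.mpr hne)
    obtain ⟨n, hn⟩ := pow_unbounded_of_one_lt ((1/2) / |x - y|) (by norm_num : (1:ℝ) < 3/2)
    have hb : |x - y| * (3/2)^n < 1/2 := by
      have h1 : |x * (3/2)^n - y * (3/2)^n| < 1/2 := by
        have hxe : x * (3/2)^n = ⌊x * (3/2)^n⌋ + Int.fract (x * (3/2)^n) :=
          (Int.floor_add_fract _).symm
        have hye : y * (3/2)^n = ⌊y * (3/2)^n⌋ + Int.fract (y * (3/2)^n) :=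
          (Int.floor_add_fract _).symm
        have := hx.2 n; have := hy.2 n
        have := Int.fract_nonneg (x * (3/2)^n)
        have := Int.fract_nonneg (y * (3/2)^n)
        have kc : ((⌊x * (3/2)^n⌋ : ℤ) : ℝ) = ((⌊y * (3/2)^n⌋ : ℤ) : ℝ) := by
          exact_mod_cast key n
        rw [abs_lt]
        constructor <;> linarith
      calc |x - y| * (3/2)^n = |(x - y) * (3/2)^n| := by
              rw [abs_mul, abs_of_nonneg (by positivity : (0:ℝ) ≤ (3/2:ℝ)^n)]
        _ = |x * (3/2)^n - y * (3/2)^n| := by ring_nf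
        _ < 1/2 := h1
    have : (1/2 : ℝ) < |x - y| * (3/2)^n := by
      rw [div_lt_iff₀ hpos] at hn
      nlinarith
    linarith
  · intro x hx hxm
    have h0 : ⌊x⌋ = (g₀ : ℤ) := hfl x hxm
    have hf := hx.2 0
    simp only [pow_zero, mul_one] at hf
    have : Int.fract x = x - g₀ := by rw [Int.fract, h0]; push_cast; ring
    constructor
    · exact hxm.1
    · rw [this] at hf; linarith
end

section
/- Let β be a real number with β > 2. Then for every positive integer m there exists a real number η ∈ (m, m+1) such that {η·β^n} ∈ [0, 1/(β−1)] for all integers n ≥ 0. -/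
theorem tijdeman_beta_gt_two (β : ℝ) (hβ : 2 < β) (m : ℕ) (hm : 0 < m) :
    ∃ η : ℝ, η ∈ Set.Ioo (m : ℝ) (m + 1) ∧
      ∀ n : ℕ, Int.fract (η * β ^ n) ∈ Set.Icc (0 : ℝ) (1 / (β - 1)) := by
  have hβ1 : (1:ℝ) < β - 1 := by linarith
  have hβ0 : (0:ℝ) < β := by linarith
  set c : ℝ := 1 / (β - 1) with hc
  have hc0 : 0 < c := by
    apply div_pos one_pos; linarith
  have hc1 : c < 1 := by
    rw [hc, div_lt_one (by linarith)]; linarith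
  have hcβ : c * β = c + 1 := by
    rw [hc]; field_simp; ring
  -- the sequence of integers
  set k : ℕ → ℤ := fun n => Nat.rec (m : ℤ) (fun _ prev => ⌊(prev : ℝ) * β⌋ + 1) n with hk
  have hk0 : k 0 = (m : ℤ) := rfl
  have hksucc : ∀ n, k (n + 1) = ⌊(k n : ℝ) * β⌋ + 1 := fun n => rfl
  have hstep1 : ∀ n, (k n : ℝ) * β < k (n + 1) := by
    intro n
    rw [hksucc n]; push_cast
    exact Int.lt_floor_add_one _
  have hstep2 : ∀ n, (k (n + 1) : ℝ) ≤ (k n : ℝ) * β + 1 := by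
    intro n
    rw [hksucc n]; push_cast
    have := Int.floor_le ((k n : ℝ) * β)
    linarith
  set a : ℕ → ℝ := fun n => (k n : ℝ) / β ^ n with ha
  set b : ℕ → ℝ := fun n => ((k n : ℝ) + c) / β ^ n with hb
  have hpow : ∀ n : ℕ, (0:ℝ) < β ^ n := fun n => pow_pos hβ0 n
  have ha_lt : ∀ n, a n < a (n + 1) := by
    intro n
    rw [ha]
    simp only
    rw [div_lt_div_iff₀ (hpow n) (hpow (n+1))]
    have := hstep1 n
    calc (k n : ℝ) * β ^ (n+1) = (k n : ℝ) * β * β ^ n := by ring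
    _ < (k (n+1) : ℝ) * β ^ n := by
        apply mul_lt_mul_of_pos_right this (hpow n)
  have ha_mono : Monotone a := monotone_nat_of_le_succ (fun n => (ha_lt n).le)
  have hb_anti : ∀ n, b (n + 1) ≤ b n := by
    intro n
    rw [hb]
    simp only
    rw [div_le_div_iff₀ (hpow (n+1)) (hpow n)]
    have h2 := hstep2 n
    calc ((k (n+1) : ℝ) + c) * β ^ n ≤ ((k n : ℝ) * β + 1 + c) * β ^ n := by
          apply mul_le_mul_of_nonneg_right (by linarith) (hpow n).le
    _ = ((k n : ℝ) + c) * β ^ (n+1) := by rw [pow_succ]; linear_combination (-(β ^ n : ℝ)) * hcβ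
  have hb_anti' : Antitone b := antitone_nat_of_succ_le hb_anti
  have hab : ∀ n, a n ≤ b n := by
    intro n
    rw [ha, hb]
    simp only
    gcongr
    linarith
  have hab' : ∀ n p, a n ≤ b p := by
    intro n p
    rcases le_total n p with h | h
    · exact (ha_mono h).trans (hab p)
    · exact (hab n).trans (hb_anti' h)
  have hbdd : BddAbove (Set.range a) := ⟨b 0, by rintro x ⟨n, rfl⟩; exact hab' n 0⟩
  set η : ℝ := ⨆ n, a n with hη
  have hle : ∀ n, a n ≤ η := fun n => le_ciSup hbdd n
  have hge : ∀ n, η ≤ b n := fun n => ciSup_le (fun p => hab' p n)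
  refine ⟨η, ⟨?_, ?_⟩, ?_⟩
  · have h1 : a 0 < a 1 := ha_lt 0
    have h0 : a 0 = m := by rw [ha]; simp [hk0]
    have := hle 1
    linarith
  · have h0 : b 0 = m + c := by rw [hb]; simp [hk0]
    have := hge 0
    rw [h0] at this
    linarith
  · intro n
    have h1 : (k n : ℝ) ≤ η * β ^ n := by
      have := hle n
      rw [ha] at this
      simp only at this
      rw [div_le_iff₀ (hpow n)] at this
      linarith [this]
    have h2 : η * β ^ n ≤ (k n : ℝ) + c := by
      have := hge n
      rw [hb] at this
      simp only at this
      rw [le_div_iff₀ (hpow n)] at this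
      linarith [this]
    have hfloor : ⌊η * β ^ n⌋ = k n := by
      apply Int.floor_eq_iff.mpr
      constructor
      · exact h1
      · push_cast; linarith
    rw [Int.fract, hfloor]
    constructor
    · linarith
    · linarith
end

section
/- Let β be a real number with β > 2 such that 2β is an odd integer. Then for every positive integer m there exists a real number η ∈ [m, m+1) such that {η·β^n} ∈ [0, 1/(2(β−1))] for all integers n ≥ 0. -/
theorem tijdeman_two_beta_odd (β : ℝ) (hβ : 2 < β)
    (hodd : ∃ k : ℤ, Odd k ∧ 2 * β = (k : ℝ)) (m : ℕ) (hm : 0 < m) :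
    ∃ η : ℝ, η ∈ Set.Ico (m : ℝ) (m + 1) ∧
      ∀ n : ℕ, Int.fract (η * β ^ n) ∈ Set.Icc (0 : ℝ) (1 / (2 * (β - 1))) := by
  obtain ⟨k, hk_odd, hkβ⟩ := hodd
  have hβ0 : (0:ℝ) < β := by linarith
  set c : ℝ := 1 / (2 * (β - 1)) with hc
  have hden : (0:ℝ) < 2 * (β - 1) := by linarith
  have hc_pos : 0 < c := by positivity
  have hc_lt : c < 1/2 := by
    rw [hc, div_lt_div_iff₀ hden (by norm_num)]
    linarith
  have hβc : β * c = c + 1/2 := by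
    rw [hc]; field_simp [show β - 1 ≠ 0 by linarith]; ring
  have hβk : β = (k:ℝ)/2 := by linarith
  have hk5 : (5:ℤ) ≤ k := by
    have h4 : (4:ℝ) < (k:ℝ) := by rw [← hkβ]; linarith
    have : (4:ℤ) < k := by exact_mod_cast h4
    omega
  -- the integer sequence
  set a : ℕ → ℤ := fun n => Nat.rec (m : ℤ) (fun _ prev => (prev * k + 1) / 2) n with ha
  have ha0 : a 0 = (m : ℤ) := rfl
  have hasucc : ∀ n, a (n+1) = (a n * k + 1) / 2 := fun n => rfl
  have ha_pos : ∀ n, 0 < a n := by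
    intro n
    induction n with
    | zero => rw [ha0]; exact_mod_cast hm
    | succ n ih =>
      have h5 : (5:ℤ) ≤ a n * k := by nlinarith
      rw [hasucc]; omega
  have hdiv : ∀ n, a n * k ≤ 2 * a (n+1) ∧ 2 * a (n+1) ≤ a n * k + 1 := by
    intro n
    rw [hasucc]
    omega
  have hkey : ∀ n, (a n : ℝ) * β ≤ (a (n+1) : ℝ) ∧ (a (n+1) : ℝ) ≤ (a n : ℝ) * β + 1/2 := by
    intro n
    obtain ⟨h1, h2⟩ := hdiv n
    have h1' : ((a n * k : ℤ) : ℝ) ≤ ((2 * a (n+1) : ℤ) : ℝ) := by exact_mod_cast h1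
    have h2' : ((2 * a (n+1) : ℤ) : ℝ) ≤ ((a n * k + 1 : ℤ) : ℝ) := by exact_mod_cast h2
    push_cast at h1' h2'
    have e : (a n : ℝ) * β * 2 = (a n : ℝ) * (k : ℝ) := by rw [hβk]; ring
    constructor <;> linarith
  -- the real sequences
  set x : ℕ → ℝ := fun n => (a n : ℝ) / β ^ n with hx
  set r : ℕ → ℝ := fun n => ((a n : ℝ) + c) / β ^ n with hr
  have hx_mono : Monotone x := by
    apply monotone_nat_of_le_succ
    intro n
    rw [hx]
    dsimp only
    rw [div_le_div_iff₀ (pow_pos hβ0 n) (pow_pos hβ0 (n+1)), pow_succ]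
    nlinarith [pow_pos hβ0 n, (hkey n).1]
  have hr_anti : Antitone r := by
    apply antitone_nat_of_succ_le
    intro n
    rw [hr]
    dsimp only
    rw [div_le_div_iff₀ (pow_pos hβ0 (n+1)) (pow_pos hβ0 n), pow_succ]
    nlinarith [pow_pos hβ0 n, (hkey n).2]
  have hxr : ∀ n, x n ≤ r n := by
    intro n
    rw [hx, hr]
    dsimp only
    gcongr
    linarith
  have hxr' : ∀ j n, x j ≤ r n := by
    intro j n
    rcases le_total j n with h | h
    · exact (hx_mono h).trans (hxr n)
    · exact (hxr j).trans (hr_anti h)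
  have hbdd : BddAbove (Set.range x) := by
    refine ⟨r 0, ?_⟩
    rintro _ ⟨j, rfl⟩
    exact hxr' j 0
  set η : ℝ := ⨆ n, x n with hη
  have hηub : ∀ n, x n ≤ η := fun n => le_ciSup hbdd n
  have hηle : ∀ n, η ≤ r n := fun n => ciSup_le (fun j => hxr' j n)
  have hmain : ∀ n, (a n : ℝ) ≤ η * β ^ n ∧ η * β ^ n ≤ (a n : ℝ) + c := by
    intro n
    have hpn : (0:ℝ) < β ^ n := pow_pos hβ0 n
    constructor
    · have := hηub n
      rw [hx] at this
      dsimp only at this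
      rw [div_le_iff₀ hpn] at this
      linarith [this]
    · have := hηle n
      rw [hr] at this
      dsimp only at this
      rw [le_div_iff₀ hpn] at this
      linarith [this]
  refine ⟨η, ?_, ?_⟩
  · constructor
    · have := hηub 0
      rw [hx] at this
      simp [ha0] at this
      simpa using this
    · have := hηle 0
      rw [hr] at this
      simp [ha0] at this
      have hm1 : η ≤ (m:ℝ) + c := by simpa using this
      linarith
  · intro n
    obtain ⟨h1, h2⟩ := hmain n
    have hfl : ⌊η * β ^ n⌋ = a n := by
      rw [Int.floor_eq_iff]
      exact ⟨h1, by push_cast; linarith⟩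
    rw [Int.fract, hfl]
    exact ⟨by linarith, by linarith⟩
end

section
/- For every real number x > 0, the limit superior of the sequence {x·(3/2)^n} minus the limit inferior of the sequence {x·(3/2)^n} (as n → ∞ over nonnegative integers) is at least 1/3. -/
open Filter

private lemma floor_ne_of_one_le_abs_sub {u v : ℝ} (h : 1 ≤ |u - v|) : ⌊u⌋ ≠ ⌊v⌋ := by
  intro heq
  have hu1 : (⌊u⌋ : ℝ) + Int.fract u = u := Int.floor_add_fract u
  have hv1 : (⌊v⌋ : ℝ) + Int.fract v = v := Int.floor_add_fract v
  have h2 : ((⌊u⌋ : ℤ) : ℝ) = ((⌊v⌋ : ℤ) : ℝ) := by exact_mod_cast heq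
  have hfu0 := Int.fract_nonneg u
  have hfu1 := Int.fract_lt_one u
  have hfv0 := Int.fract_nonneg v
  have hfv1 := Int.fract_lt_one v
  rcases le_abs.mp h with h3 | h3 <;> linarith



private lemma pow_identity (x : ℝ) (p j q : ℕ) :
    x*(3/2)^(p + j*q) * 2^(j*q) = x*(3/2)^p * 3^(j*q) := by
  rw [pow_add, div_pow]
  field_simp
  rw [mul_assoc, ← mul_pow]; norm_num

private lemma aux_zero {c : ℤ} {q : ℕ} (hq : 0 < q) (h : ∀ j : ℕ, (2:ℤ)^(j*q) ∣ c) : c = 0 := by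
  by_contra hc
  have h2 : (2:ℤ)^(c.natAbs * q) ≤ |c| :=
    Int.le_of_dvd (abs_pos.mpr hc) ((dvd_abs _ _).mpr (h c.natAbs))
  have hn : c.natAbs < 2^(c.natAbs * q) :=
    lt_of_lt_of_le Nat.lt_two_pow_self
      (Nat.pow_le_pow_right (by norm_num) (Nat.le_mul_of_pos_right _ hq))
  have h3 : |c| < (2:ℤ)^(c.natAbs*q) := by
    rw [Int.abs_eq_natAbs]
    exact_mod_cast hn
  linarith

set_option maxHeartbeats 1000000 in
theorem flatto_lagarias_pollington (x : ℝ) (hx : 0 < x) :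
    (1 : ℝ) / 3 ≤
      Filter.limsup (fun n : ℕ => Int.fract (x * (3 / 2) ^ n)) Filter.atTop -
      Filter.liminf (fun n : ℕ => Int.fract (x * (3 / 2) ^ n)) Filter.atTop := by
  by_contra hcon
  push_neg at hcon
  set f : ℕ → ℝ := fun n : ℕ => Int.fract (x * (3 / 2) ^ n) with hf
  have hf0 : ∀ n, 0 ≤ f n := fun n => Int.fract_nonneg _
  have hf1 : ∀ n, f n < 1 := fun n => Int.fract_lt_one _
  have hbdd : IsBoundedUnder (· ≤ ·) atTop f := isBoundedUnder_of ⟨1, fun n => (hf1 n).le⟩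
  have hbdd' : IsBoundedUnder (· ≥ ·) atTop f := isBoundedUnder_of ⟨0, fun n => hf0 n⟩
  set l : ℝ := liminf f atTop with hl
  set L : ℝ := limsup f atTop with hL
  have hlL : l ≤ L := liminf_le_limsup hbdd hbdd'
  set ε : ℝ := (1/3 - (L - l))/3 with hε
  have hε0 : 0 < ε := by rw [hε]; linarith
  set w : ℝ := L - l + 2*ε with hwdef
  have hw0 : 0 < w := by rw [hwdef]; linarith
  have hw : w < 1/3 := by rw [hwdef, hε]; linarith
  have hup : ∀ᶠ n in atTop, f n < L + ε := eventually_lt_of_limsup_lt (by linarith) hbdd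
  have hlo : ∀ᶠ n in atTop, l - ε < f n := eventually_lt_of_lt_liminf (by linarith) hbdd'
  obtain ⟨N, hN⟩ := eventually_atTop.mp (hup.and hlo)
  have hIw : ∀ n, N ≤ n → l - ε < f n ∧ f n < L + ε := fun n hn => ⟨(hN n hn).2, (hN n hn).1⟩
  have habs : ∀ n k, N ≤ n → N ≤ k → |f n - f k| ≤ w := by
    intro n k hn hk
    have h1 := hIw n hn; have h2 := hIw k hk
    rw [abs_le]
    constructor <;> linarith [h1.1, h1.2, h2.1, h2.2]
  set γ : ℝ := (1 - 2*w)/3 with hγdef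
  set η : ℝ := (1 - 3*w)/2 with hηdef
  have hγ0 : 0 < γ := by rw [hγdef]; linarith
  have hη0 : 0 < η := by rw [hηdef]; linarith
  set ρ : ℝ := min γ η with hρdef
  have hρ0 : 0 < ρ := lt_min hγ0 hη0
  have hργ : ρ ≤ γ := min_le_left _ _
  have hρη : ρ ≤ η := min_le_right _ _
  clear_value l L ε w γ η ρ
  -- key digit identity
  have he : ∀ n k : ℕ,
      ((2 * ⌊x*(3/2)^(n+1)⌋ - 3 * ⌊x*(3/2)^n⌋ - (2 * ⌊x*(3/2)^(k+1)⌋ - 3 * ⌊x*(3/2)^k⌋) : ℤ) : ℝ)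
        = 3*(f n - f k) - 2*(f (n+1) - f (k+1)) := by
    intro n k
    have hn1 : (⌊x*(3/2)^n⌋ : ℝ) + f n = x*(3/2)^n := Int.floor_add_fract _
    have hn2 : (⌊x*(3/2)^(n+1)⌋ : ℝ) + f (n+1) = x*(3/2)^(n+1) := Int.floor_add_fract _
    have hk1 : (⌊x*(3/2)^k⌋ : ℝ) + f k = x*(3/2)^k := Int.floor_add_fract _
    have hk2 : (⌊x*(3/2)^(k+1)⌋ : ℝ) + f (k+1) = x*(3/2)^(k+1) := Int.floor_add_fract _
    have hpn : x*(3/2)^(n+1) = (x*(3/2)^n) * (3/2) := by ring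
    have hpk : x*(3/2)^(k+1) = (x*(3/2)^k) * (3/2) := by ring
    push_cast
    linarith [hn1, hn2, hk1, hk2, hpn, hpk]
  have hstep : ∀ n k, N ≤ n → N ≤ k → |f n - f k| < γ →
      f (n+1) - f (k+1) = 3/2 * (f n - f k) := by
    intro n k hn hk hlt
    set d : ℤ := 2 * ⌊x*(3/2)^(n+1)⌋ - 3 * ⌊x*(3/2)^n⌋ -
      (2 * ⌊x*(3/2)^(k+1)⌋ - 3 * ⌊x*(3/2)^k⌋) with hd
    have h1 : (d : ℝ) = 3*(f n - f k) - 2*(f (n+1) - f (k+1)) := by rw [hd]; exact he n k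
    have h2 := habs (n+1) (k+1) (by omega) (by omega)
    have h3 : |(d:ℝ)| < 1 := by
      rcases abs_lt.mp hlt with ⟨ha, hb⟩
      rcases abs_le.mp h2 with ⟨hc, hdd⟩
      rw [abs_lt]
      constructor <;> rw [h1] <;> rw [hγdef] at ha hb <;> linarith
    have h4 : d = 0 := by
      have h5 : ((|d| : ℤ) : ℝ) < 1 := by rw [Int.cast_abs]; exact h3
      have h6 : |d| < 1 := by exact_mod_cast h5
      have h7 := abs_lt.mp h6
      omega
    rw [h4] at h1
    push_cast at h1
    linarith
  have hstep2 : ∀ n k, N ≤ n → N ≤ k → ρ ≤ |f n - f k| → ρ ≤ |f (n+1) - f (k+1)| := by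
    intro n k hn hk hge
    set d : ℤ := 2 * ⌊x*(3/2)^(n+1)⌋ - 3 * ⌊x*(3/2)^n⌋ -
      (2 * ⌊x*(3/2)^(k+1)⌋ - 3 * ⌊x*(3/2)^k⌋) with hd
    have h1 : (d : ℝ) = 3*(f n - f k) - 2*(f (n+1) - f (k+1)) := by rw [hd]; exact he n k
    have h2 := habs n k hn hk
    rcases eq_or_ne d 0 with h0 | h0
    · rw [h0] at h1
      push_cast at h1
      have heq : f (n+1) - f (k+1) = 3/2 * (f n - f k) := by linarith
      rw [heq, abs_mul]
      have h32 : |(3/2 : ℝ)| = 3/2 := by norm_num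
      rw [h32]
      nlinarith [abs_nonneg (f n - f k)]
    · have h5 : d ≤ -1 ∨ 1 ≤ d := by omega
      have hc := abs_le.mp h2
      refine le_trans hρη (le_abs.mpr ?_)
      rcases h5 with h5 | h5
      · left
        have h6 : (d:ℝ) ≤ -1 := by exact_mod_cast h5
        rw [hηdef]; linarith
      · right
        have h6 : (1:ℝ) ≤ (d:ℝ) := by exact_mod_cast h5
        rw [hηdef]; linarith
  -- separation lemma
  have hsep : ∀ n k, N ≤ n → N ≤ k → f n ≠ f k →
      ∃ J, ∀ j, J ≤ j → ρ ≤ |f (n+j) - f (k+j)| := by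
    intro n k hn hk hne
    have h0 : 0 < |f n - f k| := abs_pos.mpr (sub_ne_zero.mpr hne)
    have hphase1 : ∃ J, ρ ≤ |f (n+J) - f (k+J)| := by
      by_contra hall
      push_neg at hall
      have hiter : ∀ j, f (n+j) - f (k+j) = (3/2)^j * (f n - f k) := by
        intro j
        induction j with
        | zero => simp
        | succ j ih =>
          have hlt : |f (n+j) - f (k+j)| < γ := lt_of_lt_of_le (hall j) hργ
          have h := hstep (n+j) (k+j) (by omega) (by omega) hlt
          have e1 : n + (j+1) = (n+j) + 1 := by omega
          have e2 : k + (j+1) = (k+j) + 1 := by omega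
          rw [e1, e2, h, ih]; ring
      obtain ⟨j, hj⟩ := pow_unbounded_of_one_lt (ρ / |f n - f k|) (by norm_num : (1:ℝ) < 3/2)
      have h2 := hall j
      rw [hiter j, abs_mul, abs_pow] at h2
      have h32 : |(3/2:ℝ)| = 3/2 := by norm_num
      rw [h32] at h2
      have h4 : ρ / |f n - f k| * |f n - f k| < (3/2)^j * |f n - f k| :=
        mul_lt_mul_of_pos_right hj h0
      rw [div_mul_cancel₀ _ (ne_of_gt h0)] at h4
      linarith
    obtain ⟨J, hJ⟩ := hphase1
    have hind : ∀ i, ρ ≤ |f (n+(J+i)) - f (k+(J+i))| := by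
      intro i
      induction i with
      | zero => simpa using hJ
      | succ i ih =>
        have h := hstep2 (n+(J+i)) (k+(J+i)) (by omega) (by omega) ih
        have e1 : n + (J+(i+1)) = (n+(J+i)) + 1 := by omega
        have e2 : k + (J+(i+1)) = (k+(J+i)) + 1 := by omega
        rw [e1, e2]; exact h
    refine ⟨J, fun j hj => ?_⟩
    obtain ⟨i, rfl⟩ := Nat.exists_eq_add_of_le hj
    exact hind i
  -- eventual periodicity via pigeonhole
  have hper : ∃ p q : ℕ, N ≤ p ∧ 0 < q ∧ f p = f (p + q) := by
    by_contra hno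
    push_neg at hno
    have hinj : ∀ n k, N ≤ n → N ≤ k → n ≠ k → f n ≠ f k := by
      intro n k hn hk hne
      rcases Nat.lt_or_ge n k with h | h
      · have h2 := hno n (k - n) hn (by omega)
        rwa [show n + (k-n) = k by omega] at h2
      · have h' : k < n := by omega
        have h2 := hno k (n - k) hk (by omega)
        rw [show k + (n-k) = n by omega] at h2
        exact fun hh => h2 hh.symm
    set B : ℤ := ⌊w/ρ⌋ with hB
    have hB0 : 0 ≤ B := Int.floor_nonneg.mpr (by positivity)
    set S : ℕ := B.toNat + 1 with hS
    have hchoice : ∀ pr : ℕ × ℕ, ∃ J : ℕ, (pr.1 < pr.2 ∧ pr.2 ≤ S) →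
        ∀ j, J ≤ j → ρ ≤ |f (N + pr.1 + j) - f (N + pr.2 + j)| := by
      intro pr
      by_cases hpr : pr.1 < pr.2 ∧ pr.2 ≤ S
      · obtain ⟨J, hJ⟩ := hsep (N + pr.1) (N + pr.2) (by omega) (by omega)
          (hinj _ _ (by omega) (by omega) (by omega))
        exact ⟨J, fun _ => hJ⟩
      · exact ⟨0, fun h => absurd h hpr⟩
    choose Jf hJf using hchoice
    set J : ℕ := ((Finset.range (S+1)) ×ˢ (Finset.range (S+1))).sup Jf with hJdef
    set F : ℕ → ℤ := fun i => ⌊(f (N + i + J) - (l - ε)) / ρ⌋ with hF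
    have hFne : ∀ i i', i < i' → i' ≤ S → F i ≠ F i' := by
      intro i i' hii hi'
      have hmem : (i, i') ∈ (Finset.range (S+1)) ×ˢ (Finset.range (S+1)) := by
        simp only [Finset.mem_product, Finset.mem_range]
        omega
      have hJle : Jf (i, i') ≤ J := Finset.le_sup hmem
      have hsep' := hJf (i, i') ⟨hii, hi'⟩ J hJle
      have harg : 1 ≤ |(f (N+i+J) - (l-ε))/ρ - (f (N+i'+J) - (l-ε))/ρ| := by
        have he' : (f (N+i+J) - (l-ε))/ρ - (f (N+i'+J) - (l-ε))/ρ
            = (f (N+i+J) - f (N+i'+J))/ρ := by ring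
        rw [he', abs_div, abs_of_pos hρ0, le_div_iff₀ hρ0, one_mul]
        exact hsep'
      simp only [hF]
      exact floor_ne_of_one_le_abs_sub harg
    have hFmem : ∀ i ∈ Finset.range (S+1), F i ∈ Finset.Icc (0:ℤ) B := by
      intro i _
      have h1 := hIw (N + i + J) (by omega)
      rw [Finset.mem_Icc]
      constructor
      · simp only [hF]
        apply Int.floor_nonneg.mpr
        apply div_nonneg _ hρ0.le
        linarith [h1.1]
      · simp only [hF, hB]
        apply Int.floor_le_floor
        rw [div_le_div_iff_of_pos_right hρ0]
        rw [hwdef]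
        linarith [h1.2]
    have hinjF : Set.InjOn F (Finset.range (S+1)) := by
      intro i hi i' hi' hFe
      by_contra hne
      simp only [Finset.coe_range, Set.mem_Iio] at hi hi'
      rcases Nat.lt_or_ge i i' with h | h
      · exact hFne i i' h (by omega) hFe
      · have h' : i' < i := by omega
        exact hFne i' i h' (by omega) hFe.symm
    have hcard := Finset.card_le_card_of_injOn F hFmem hinjF
    rw [Finset.card_range, Int.card_Icc] at hcard
    omega
  obtain ⟨p, q, hpN, hq0, hpq⟩ := hper
  -- exact periodicity propagates
  have hper1 : ∀ r, f (p + r) = f (p + r + q) := by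
    intro r
    induction r with
    | zero => simpa using hpq
    | succ r ih =>
      have hlt : |f (p+r) - f (p+r+q)| < γ := by rw [ih]; simpa using hγ0
      have h := hstep (p+r) (p+r+q) (by omega) (by omega) hlt
      have e2 : p + (r+1) + q = (p+r+q) + 1 := by omega
      have e1 : p + (r+1) = (p+r) + 1 := by omega
      rw [e2, e1]
      linarith [h, ih]
  have hmult : ∀ j, f (p + j*q) = f p := by
    intro j
    induction j with
    | zero => simp
    | succ j ih =>
      rw [show p + (j+1)*q = p + j*q + q by ring]
      rw [← hper1 (j*q)]
      exact ih
  have hyt : (⌊x * (3/2)^p⌋ : ℝ) + f p = x * (3/2)^p := Int.floor_add_fract _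
  have hAeq : ∀ j : ℕ, ((⌊x*(3/2)^(p + j*q)⌋ : ℝ) + f p) * 2^(j*q)
      = (x*(3/2)^p) * 3^(j*q) := by
    intro j
    have h2 : f (p + j*q) = f p := hmult j
    have hsum : (⌊x*(3/2)^(p + j*q)⌋ : ℝ) + f p = x*(3/2)^(p + j*q) := by
      rw [← h2]; exact Int.floor_add_fract _
    rw [hsum]
    exact pow_identity x p j q
  have hq3 : (2:ℤ)^q < 3^q := by
    apply pow_lt_pow_left₀ (by norm_num) (by norm_num)
    omega
  have hPt : (2:ℝ)^q * (⌊x*(3/2)^(p+q)⌋:ℝ) - (3:ℝ)^q * (⌊x*(3/2)^p⌋:ℝ)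
      = ((3:ℝ)^q - (2:ℝ)^q) * f p := by
    have h1 := hAeq 1
    simp only [one_mul] at h1
    linear_combination h1 - (3:ℝ)^q * hyt
  have hintAll : ∀ j : ℕ,
      ((3^q - 2^q) * ⌊x*(3/2)^(p+j*q)⌋ + (2^q*⌊x*(3/2)^(p+q)⌋ - 3^q*⌊x*(3/2)^p⌋)) * 2^(j*q)
      = ((3^q - 2^q) * ⌊x*(3/2)^p⌋ + (2^q*⌊x*(3/2)^(p+q)⌋ - 3^q*⌊x*(3/2)^p⌋)) * 3^(j*q) := by
    intro j
    have h1 := hAeq j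
    have hR : (((3:ℝ)^q - 2^q) * (⌊x*(3/2)^(p+j*q)⌋:ℝ)
          + ((2:ℝ)^q*(⌊x*(3/2)^(p+q)⌋:ℝ) - (3:ℝ)^q*(⌊x*(3/2)^p⌋:ℝ))) * 2^(j*q)
        = (((3:ℝ)^q - 2^q) * (⌊x*(3/2)^p⌋:ℝ)
          + ((2:ℝ)^q*(⌊x*(3/2)^(p+q)⌋:ℝ) - (3:ℝ)^q*(⌊x*(3/2)^p⌋:ℝ))) * 3^(j*q) := by
      linear_combination ((3:ℝ)^q - 2^q) * h1 - ((3:ℝ)^q - 2^q) * (3:ℝ)^(j*q) * hyt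
        + ((2:ℝ)^(j*q) - (3:ℝ)^(j*q)) * hPt
    exact_mod_cast hR
  have hdvd : ∀ j : ℕ, (2:ℤ)^(j*q) ∣
      ((3^q - 2^q) * ⌊x*(3/2)^p⌋ + (2^q*⌊x*(3/2)^(p+q)⌋ - 3^q*⌊x*(3/2)^p⌋)) := by
    intro j
    have hdvd2 : (2:ℤ)^(j*q) ∣
        ((3^q - 2^q) * ⌊x*(3/2)^p⌋ + (2^q*⌊x*(3/2)^(p+q)⌋ - 3^q*⌊x*(3/2)^p⌋)) * 3^(j*q) :=
      ⟨(3^q - 2^q) * ⌊x*(3/2)^(p+j*q)⌋ + (2^q*⌊x*(3/2)^(p+q)⌋ - 3^q*⌊x*(3/2)^p⌋),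
        by rw [← hintAll j]; ring⟩
    have hcop : IsCoprime ((2:ℤ)^(j*q)) ((3:ℤ)^(j*q)) := by
      apply IsCoprime.pow
      rw [Int.isCoprime_iff_gcd_eq_one]
      decide
    exact hcop.dvd_of_dvd_mul_right hdvd2
  have hzero : ((3^q - 2^q) * ⌊x*(3/2)^p⌋ + (2^q*⌊x*(3/2)^(p+q)⌋ - 3^q*⌊x*(3/2)^p⌋) : ℤ) = 0 :=
    aux_zero hq0 hdvd
  have hcast : (((3^q - 2^q) * ⌊x*(3/2)^p⌋ + (2^q*⌊x*(3/2)^(p+q)⌋ - 3^q*⌊x*(3/2)^p⌋) : ℤ) : ℝ)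
      = 0 := by rw [hzero]; norm_num
  push_cast at hcast
  have hfr : ((3:ℝ)^q - 2^q) * ((⌊x*(3/2)^p⌋:ℝ) + f p) = 0 := by
    linear_combination hcast - hPt
  rw [hyt] at hfr
  have h23 : (2:ℝ)^q < (3:ℝ)^q := by
    apply pow_lt_pow_left₀ (by norm_num) (by norm_num)
    omega
  have hX : (0:ℝ) < x*(3/2)^p := by positivity
  have hprod := mul_pos (sub_pos.mpr h23) hX
  linarith
end
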